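/- Quadrupling of the uniform-input statistical strength in the Tsirelson-box construction: with P₀ and P_f as in the explicit (2,4)-scenario construction, S_u(P_f) ≥ 4·S_u(P₀). -/

import Mathlib

open scoped ENNReal
open Finset

/-- A probability distribution on a finite type. -/
def IsDist {Z : Type*} [Fintype Z] (p : Z → ℝ) : Prop :=
  (∀ z, 0 ≤ p z) ∧ ∑ z, p z = 1

/-- Relative entropy (Kullback-Leibler divergence) of finitely supported
distributions, valued in `[0,∞]`, with the conventions `0·log(0/t) = 0` and
`S(p‖q) = ∞` whenever `q` vanishes at a point where `p` does not. -/
noncomputable def relEnt {Z : Type*} [Fintype Z] (p q : Z → ℝ) : ℝ≥0∞ :=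
  if ∃ z, p z ≠ 0 ∧ q z = 0 then ⊤
  else ENNReal.ofReal (∑ z, p z * Real.log (p z / q z))

/-- A behavior in the (r,s) Bell scenario: `P a b x y = P(a,b|x,y)`. -/
def IsBehavior {r s : ℕ} (P : Fin r → Fin r → Fin s → Fin s → ℝ) : Prop :=
  (∀ a b x y, 0 ≤ P a b x y) ∧ ∀ x y, ∑ a, ∑ b, P a b x y = 1

/-- The no-signaling conditions. -/
def NoSignaling {r s : ℕ} (P : Fin r → Fin r → Fin s → Fin s → ℝ) : Prop :=
  (∀ b x x' y, ∑ a, P a b x y = ∑ a, P a b x' y) ∧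
  (∀ a x y y', ∑ b, P a b x y = ∑ b, P a b x y')

/-- Local (local-hidden-variable) behavior. -/
def IsLocal {r s : ℕ} (P : Fin r → Fin r → Fin s → Fin s → ℝ) : Prop :=
  ∃ (n : ℕ) (q : Fin n → ℝ) (PA : Fin r → Fin s → Fin n → ℝ)
    (PB : Fin r → Fin s → Fin n → ℝ),
    IsDist q ∧
    (∀ x l, (∀ a, 0 ≤ PA a x l) ∧ ∑ a, PA a x l = 1) ∧
    (∀ y l, (∀ b, 0 ≤ PB b y l) ∧ ∑ b, PB b y l = 1) ∧
    (∀ a b x y, P a b x y = ∑ l, q l * PA a x l * PB b y l)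

/-- Output distribution `P(·,·|x,y)` of a behavior for fixed inputs. -/
def outDist {r s : ℕ} (P : Fin r → Fin r → Fin s → Fin s → ℝ) (x y : Fin s) :
    Fin r × Fin r → ℝ := fun ab => P ab.1 ab.2 x y

/-- The behavior relative entropy `S_b(P‖P')`: the maximum over input pairs
`(x,y)` of the relative entropy of the output distributions. -/
noncomputable def Sb {r s : ℕ} (P P' : Fin r → Fin r → Fin s → Fin s → ℝ) : ℝ≥0∞ :=
  Finset.univ.sup fun xy : Fin s × Fin s =>
    relEnt (outDist P xy.1 xy.2) (outDist P' xy.1 xy.2)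

/-- A global wiring from the (r,s) scenario to the (rf,sf) scenario. -/
structure GlobalWiring (r s rf sf : ℕ) where
  I : Fin s → Fin s → Fin sf → Fin sf → ℝ          -- I x y χ ψ  =  I(x,y|χ,ψ)
  O : Fin rf → Fin rf → Fin r → Fin r → Fin s → Fin s → Fin sf → Fin sf → ℝ
    -- O α β a b x y χ ψ  =  O(α,β|a,b,x,y,χ,ψ)
  I_nonneg : ∀ x y χ ψ, 0 ≤ I x y χ ψ
  I_sum : ∀ χ ψ, ∑ x, ∑ y, I x y χ ψ = 1
  O_nonneg : ∀ α β a b x y χ ψ, 0 ≤ O α β a b x y χ ψ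
  O_sum : ∀ a b x y χ ψ, ∑ α, ∑ β, O α β a b x y χ ψ = 1

/-- Action of a global wiring on a behavior. -/
noncomputable def GlobalWiring.apply {r s rf sf : ℕ} (W : GlobalWiring r s rf sf)
    (P : Fin r → Fin r → Fin s → Fin s → ℝ) :
    Fin rf → Fin rf → Fin sf → Fin sf → ℝ :=
  fun α β χ ψ => ∑ a, ∑ b, ∑ x, ∑ y,
    W.O α β a b x y χ ψ * P a b x y * W.I x y χ ψ

/-- LOSR wiring: a global wiring whose input and output boxes are local. -/
def GlobalWiring.IsLOSR {r s rf sf : ℕ} (W : GlobalWiring r s rf sf) : Prop :=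
  ∃ (n m : ℕ) (q : Fin n → ℝ) (q' : Fin m → ℝ)
    (IA : Fin s → Fin sf → Fin n → ℝ) (IB : Fin s → Fin sf → Fin n → ℝ)
    (OA : Fin rf → Fin r → Fin s → Fin sf → Fin m → ℝ)
    (OB : Fin rf → Fin r → Fin s → Fin sf → Fin m → ℝ),
    IsDist q ∧ IsDist q' ∧
    (∀ χ l, (∀ x, 0 ≤ IA x χ l) ∧ ∑ x, IA x χ l = 1) ∧
    (∀ ψ l, (∀ y, 0 ≤ IB y ψ l) ∧ ∑ y, IB y ψ l = 1) ∧
    (∀ a x χ u, (∀ α, 0 ≤ OA α a x χ u) ∧ ∑ α, OA α a x χ u = 1) ∧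
    (∀ b y ψ u, (∀ β, 0 ≤ OB β b y ψ u) ∧ ∑ β, OB β b y ψ u = 1) ∧
    (∀ x y χ ψ, W.I x y χ ψ = ∑ l, q l * IA x χ l * IB y ψ l) ∧
    (∀ α β a b x y χ ψ,
      W.O α β a b x y χ ψ = ∑ u, q' u * OA α a x χ u * OB β b y ψ u)

/-- UCLOSR wiring: a global wiring whose input and output boxes are products. -/
def GlobalWiring.IsUCLOSR {r s rf sf : ℕ} (W : GlobalWiring r s rf sf) : Prop :=
  ∃ (IA : Fin s → Fin sf → ℝ) (IB : Fin s → Fin sf → ℝ)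
    (OA : Fin rf → Fin r → Fin s → Fin sf → ℝ)
    (OB : Fin rf → Fin r → Fin s → Fin sf → ℝ),
    (∀ χ, (∀ x, 0 ≤ IA x χ) ∧ ∑ x, IA x χ = 1) ∧
    (∀ ψ, (∀ y, 0 ≤ IB y ψ) ∧ ∑ y, IB y ψ = 1) ∧
    (∀ a x χ, (∀ α, 0 ≤ OA α a x χ) ∧ ∑ α, OA α a x χ = 1) ∧
    (∀ b y ψ, (∀ β, 0 ≤ OB β b y ψ) ∧ ∑ β, OB β b y ψ = 1) ∧
    (∀ x y χ ψ, W.I x y χ ψ = IA x χ * IB y ψ) ∧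
    (∀ α β a b x y χ ψ, W.O α β a b x y χ ψ = OA α a x χ * OB β b y ψ)

/-- The relative entropy of nonlocality `S_nl`. -/
noncomputable def Snl {r s : ℕ} (P : Fin r → Fin r → Fin s → Fin s → ℝ) : ℝ≥0∞ :=
  ⨅ (Q : Fin r → Fin r → Fin s → Fin s → ℝ) (_ : IsBehavior Q ∧ IsLocal Q), Sb P Q

/-- The uniform-input statistical strength `S_u`. -/
noncomputable def Su {r s : ℕ} (P : Fin r → Fin r → Fin s → Fin s → ℝ) : ℝ≥0∞ :=
  ⨅ (Q : Fin r → Fin r → Fin s → Fin s → ℝ) (_ : IsBehavior Q ∧ IsLocal Q),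
    ((s : ℝ≥0∞) ^ 2)⁻¹ * ∑ x, ∑ y, relEnt (outDist P x y) (outDist Q x y)

/-- The uncorrelated-input statistical strength `S_uc`. -/
noncomputable def Suc {r s : ℕ} (P : Fin r → Fin r → Fin s → Fin s → ℝ) : ℝ≥0∞ :=
  ⨆ (DA : Fin s → ℝ) (DB : Fin s → ℝ) (_ : IsDist DA ∧ IsDist DB),
    ⨅ (Q : Fin r → Fin r → Fin s → Fin s → ℝ) (_ : IsBehavior Q ∧ IsLocal Q),
      ∑ x, ∑ y, ENNReal.ofReal (DA x * DB y) *
        relEnt (outDist P x y) (outDist Q x y)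

/-- The Tsirelson probability `p = 1/2 + 1/(2√2)`. -/
noncomputable def tsp : ℝ := 1 / 2 + 1 / (2 * Real.sqrt 2)

/-- The behavior `P₀` of the (2,4)-scenario construction: a Tsirelson box on
inputs `x·y ≤ 1` and white noise elsewhere. -/
noncomputable def TsBox : Fin 2 → Fin 2 → Fin 4 → Fin 4 → ℝ := fun a b x y =>
  if (x : ℕ) * (y : ℕ) = 0 then (if a = b then tsp / 2 else (1 - tsp) / 2)
  else if (x : ℕ) * (y : ℕ) = 1 then (if a = b then (1 - tsp) / 2 else tsp / 2)
  else 1 / 4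

/-- The wired behavior `P_f` of the (2,4)-scenario construction. -/
noncomputable def TsBoxF : Fin 2 → Fin 2 → Fin 4 → Fin 4 → ℝ := fun α β χ ψ =>
  if (χ : ℕ) * (ψ : ℕ) ≤ 1 then TsBox α β χ ψ
  else TsBox α β ⟨(χ : ℕ) % 2, by omega⟩ ⟨(ψ : ℕ) % 2, by omega⟩

/-!
Both behaviors have uniform marginals, so each is determined by its correlator
`E(x,y) = ∑ (-1)^(a+b) P(a,b|x,y)`: `P₀` has `E = ±1/√2` (with the CHSH sign) on the cells
`x·y ≤ 1` and `E = 0` elsewhere, while `P_f` has `E = ±1/√2` on all sixteen cells. Let `D` be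
the relative entropy of the two-outcome distribution with correlator `1/√2` from the one with
correlator `1/2`.

Upper bound: an explicit local box agrees with `P₀` outside the block `x, y ≤ 1` and is the
optimal CHSH local box (correlator `±1/2`) on it, so `S_u(P₀) ≤ 4D/16`.

Lower bound: let `Q*` have correlator `±1/2` on every cell. For a local `Q`, `log t ≤ t - 1`
gives `∑ S(P_f‖Q) ≥ 16 D + 16 - ∑ (P_f/Q*)·Q`. The likelihood ratio `P_f/Q*` is affine in
the product of the output signs with the CHSH sign, so by the CHSH inequality the last sum is
at most `16`, and `S_u(P_f) ≥ D`.
-/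

open Real

section RelEnt

variable {Z : Type*} [Fintype Z]

theorem relEnt_self (p : Z → ℝ) : relEnt p p = 0 := by
  rw [relEnt, if_neg (by rintro ⟨z, hp, hp'⟩; exact hp hp'), ENNReal.ofReal_eq_zero]
  refine (Finset.sum_eq_zero fun z _ => ?_).le
  by_cases hz : p z = 0 <;> simp [hz]

theorem relEnt_eq_top {p q : Z → ℝ} (z : Z) (hp : p z ≠ 0) (hq : q z = 0) :
    relEnt p q = ⊤ :=
  if_pos ⟨z, hp, hq⟩

theorem relEnt_eq_ofReal {p q : Z → ℝ} (hq : ∀ z, q z ≠ 0) :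
    relEnt p q = ENNReal.ofReal (∑ z, p z * log (p z / q z)) :=
  if_neg fun ⟨z, _, hz⟩ => hq z hz

end RelEnt

theorem mul_log_div_add_sub_le {p q q₀ : ℝ} (hp : 0 < p) (hq : 0 < q) (hq₀ : 0 < q₀) :
    p * log (p / q₀) + p - p / q₀ * q ≤ p * log (p / q) := by
  have hlog : log (q / q₀) ≤ q / q₀ - 1 := log_le_sub_one_of_pos (by positivity)
  have hsplit : log (p / q₀) = log (p / q) + log (q / q₀) := by
    rw [← log_mul (by positivity) (by positivity)]
    field_simp
  have : p / q₀ * q = p * (q / q₀) := by ring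
  rw [hsplit, this]
  nlinarith [mul_le_mul_of_nonneg_left hlog hp.le]

theorem sum_sum_sum_mul_mul {ι κ : Type*} [Fintype ι] [Fintype κ] (q : κ → ℝ)
    (f g : ι → κ → ℝ) :
    ∑ a, ∑ b, ∑ l, q l * f a l * g b l = ∑ l, q l * (∑ a, f a l) * ∑ b, g b l := by
  simp only [Finset.mul_sum, Finset.sum_mul]
  exact (Finset.sum_comm.trans (Finset.sum_congr rfl fun _ _ => Finset.sum_comm)).trans
    Finset.sum_comm

theorem IsLocal.isBehavior {r s : ℕ} {Q : Fin r → Fin r → Fin s → Fin s → ℝ}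
    (hQ : IsLocal Q) : IsBehavior Q := by
  obtain ⟨n, q, PA, PB, hq, hPA, hPB, hQ⟩ := hQ
  refine ⟨fun a b x y => ?_, fun x y => ?_⟩
  · rw [hQ]
    exact Finset.sum_nonneg fun l _ =>
      mul_nonneg (mul_nonneg (hq.1 l) ((hPA x l).1 a)) ((hPB y l).1 b)
  · simp only [hQ, sum_sum_sum_mul_mul, (hPA x _).2, (hPB y _).2, mul_one, hq.2]

def spin (a : Fin 2) : ℝ := if a = 0 then 1 else -1

@[simp] theorem spin_zero : spin 0 = 1 := rfl

@[simp] theorem spin_one : spin 1 = -1 := rfl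

theorem spin_mul_spin (a b : Fin 2) : spin a * spin b = if a = b then 1 else -1 := by
  fin_cases a <;> fin_cases b <;> simp

theorem abs_spin_mul_le_one (a : Fin 2) {t : ℝ} (ht : |t| ≤ 1) : |spin a * t| ≤ 1 := by
  fin_cases a <;> simpa using ht

theorem abs_sum_spin_mul_le_one {p : Fin 2 → ℝ} (hp : ∀ a, 0 ≤ p a)
    (hsum : ∑ a, p a = 1) : |∑ a, spin a * p a| ≤ 1 := by
  rw [Fin.sum_univ_two] at hsum ⊢
  rw [abs_le]
  constructor <;> simp <;> linarith [hp 0, hp 1]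

noncomputable def corrBox {s : ℕ} (E : Fin s → Fin s → ℝ) :
    Fin 2 → Fin 2 → Fin s → Fin s → ℝ :=
  fun a b x y => (1 + spin a * spin b * E x y) / 4

theorem corrBox_pos {s : ℕ} {E : Fin s → Fin s → ℝ} {x y : Fin s} (hE : |E x y| < 1)
    (a b : Fin 2) : 0 < corrBox E a b x y := by
  have := abs_lt.mp hE
  unfold corrBox
  fin_cases a <;> fin_cases b <;> simp <;> linarith

theorem sum_corrBox {s : ℕ} (E : Fin s → Fin s → ℝ) (x y : Fin s) :
    ∑ a, ∑ b, corrBox E a b x y = 1 := by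
  simp only [corrBox, Fin.sum_univ_two, spin_zero, spin_one]
  ring

-- Each strategy `l` is played with probability `w l / 2` as given and as its global sign flip,
-- which makes the marginals uniform without changing the correlations.
theorem isLocal_corrBox {s n : ℕ} {w : Fin n → ℝ} (hw : IsDist w)
    {U V : Fin n → Fin s → ℝ} (hU : ∀ l x, |U l x| ≤ 1) (hV : ∀ l y, |V l y| ≤ 1) :
    IsLocal (corrBox fun x y => ∑ l, w l * U l x * V l y) := by
  refine ⟨n + n, Fin.append (w · / 2) (w · / 2),
    fun a x => Fin.append (fun l => (1 + spin a * U l x) / 2) (fun l => (1 - spin a * U l x) / 2),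
    fun b y => Fin.append (fun l => (1 + spin b * V l y) / 2) (fun l => (1 - spin b * V l y) / 2),
    ⟨fun l => ?_, ?_⟩, fun x l => ⟨fun a => ?_, ?_⟩, fun y l => ⟨fun b => ?_, ?_⟩, ?_⟩
  · refine Fin.addCases (fun l => ?_) (fun l => ?_) l <;>
      simpa only [Fin.append_left, Fin.append_right] using div_nonneg (hw.1 l) zero_le_two
  · rw [Fin.sum_univ_add]
    simp only [Fin.append_left, Fin.append_right, ← Finset.sum_div, hw.2]
    norm_num
  · refine Fin.addCases (fun l => ?_) (fun l => ?_) l <;>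
      simp only [Fin.append_left, Fin.append_right] <;>
      linarith [abs_le.mp (abs_spin_mul_le_one a (hU l x))]
  · refine Fin.addCases (fun l => ?_) (fun l => ?_) l <;>
      simp only [Fin.append_left, Fin.append_right, Fin.sum_univ_two, spin_zero, spin_one] <;> ring
  · refine Fin.addCases (fun l => ?_) (fun l => ?_) l <;>
      simp only [Fin.append_left, Fin.append_right] <;>
      linarith [abs_le.mp (abs_spin_mul_le_one b (hV l y))]
  · refine Fin.addCases (fun l => ?_) (fun l => ?_) l <;>
      simp only [Fin.append_left, Fin.append_right, Fin.sum_univ_two, spin_zero, spin_one] <;> ring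
  · intro a b x y
    rw [Fin.sum_univ_add]
    simp only [Fin.append_left, Fin.append_right, corrBox, ← Finset.sum_add_distrib]
    have hterm : ∀ l, w l / 2 * ((1 + spin a * U l x) / 2) * ((1 + spin b * V l y) / 2) +
        w l / 2 * ((1 - spin a * U l x) / 2) * ((1 - spin b * V l y) / 2) =
        w l / 4 + spin a * spin b * (w l * U l x * V l y) / 4 := fun l => by ring
    simp only [hterm, Finset.sum_add_distrib, ← Finset.sum_div, ← Finset.mul_sum, hw.2]
    ring

def correlator {s : ℕ} (Q : Fin 2 → Fin 2 → Fin s → Fin s → ℝ) (x y : Fin s) : ℝ :=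
  ∑ a, ∑ b, spin a * spin b * Q a b x y

theorem IsLocal.exists_correlator_eq {s : ℕ} {Q : Fin 2 → Fin 2 → Fin s → Fin s → ℝ}
    (hQ : IsLocal Q) :
    ∃ (n : ℕ) (q : Fin n → ℝ) (A B : Fin n → Fin s → ℝ), IsDist q ∧
      (∀ l x, |A l x| ≤ 1) ∧ (∀ l y, |B l y| ≤ 1) ∧
      ∀ x y, correlator Q x y = ∑ l, q l * A l x * B l y := by
  obtain ⟨n, q, PA, PB, hq, hPA, hPB, hQ⟩ := hQ
  refine ⟨n, q, fun l x => ∑ a, spin a * PA a x l, fun l y => ∑ b, spin b * PB b y l, hq,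
    fun l x => abs_sum_spin_mul_le_one (hPA x l).1 (hPA x l).2,
    fun l y => abs_sum_spin_mul_le_one (hPB y l).1 (hPB y l).2, fun x y => ?_⟩
  rw [correlator, ← sum_sum_sum_mul_mul]
  simp only [hQ, Finset.mul_sum]
  exact Finset.sum_congr rfl fun a _ => Finset.sum_congr rfl fun b _ =>
    Finset.sum_congr rfl fun l _ => by ring

noncomputable def corrDiv (c c' : ℝ) : ℝ :=
  (1 + c) / 2 * log ((1 + c) / (1 + c')) + (1 - c) / 2 * log ((1 - c) / (1 - c'))

theorem corrDiv_neg (c c' : ℝ) : corrDiv (-c) (-c') = corrDiv c c' := by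
  simp only [corrDiv, sub_neg_eq_add, ← sub_eq_add_neg]
  ring

theorem sum_corrBox_mul_log_div {s : ℕ} (E E' : Fin s → Fin s → ℝ) (x y : Fin s) :
    ∑ a, ∑ b, corrBox E a b x y * log (corrBox E a b x y / corrBox E' a b x y) =
      corrDiv (E x y) (E' x y) := by
  simp only [corrBox, Fin.sum_univ_two, spin_zero, spin_one, corrDiv,
    div_div_div_cancel_right₀ (four_ne_zero' ℝ), one_mul, mul_one, neg_mul, neg_neg,
    ← sub_eq_add_neg]
  ring

theorem relEnt_corrBox {s : ℕ} (E : Fin s → Fin s → ℝ) {E' : Fin s → Fin s → ℝ}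
    {x y : Fin s} (hE' : |E' x y| < 1) :
    relEnt (outDist (corrBox E) x y) (outDist (corrBox E') x y) =
      ENNReal.ofReal (corrDiv (E x y) (E' x y)) := by
  rw [relEnt_eq_ofReal (q := outDist (corrBox E') x y) fun z => (corrBox_pos hE' z.1 z.2).ne',
    Fintype.sum_prod_type, ← sum_corrBox_mul_log_div]
  rfl

def chshSign (x y : Fin 4) : ℝ := if (x : ℕ) % 2 = 1 ∧ (y : ℕ) % 2 = 1 then -1 else 1

theorem chshSign_eq_one_or (x y : Fin 4) : chshSign x y = 1 ∨ chshSign x y = -1 := by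
  unfold chshSign
  split_ifs <;> simp

theorem abs_chshSign_div_lt_one (x y : Fin 4) {c : ℝ} (hc : 1 < c) : |chshSign x y / c| < 1 := by
  have : |chshSign x y| = 1 := by rcases chshSign_eq_one_or x y with h | h <;> simp [h]
  rw [abs_div, this, abs_of_pos (by linarith), div_lt_one (by linarith)]
  exact hc

theorem chsh_le_eight {A B : Fin 4 → ℝ} (hA : ∀ x, |A x| ≤ 1) (hB : ∀ y, |B y| ≤ 1) :
    ∑ x, ∑ y, chshSign x y * (A x * B y) ≤ 8 := by
  have hsum : ∑ x, ∑ y, chshSign x y * (A x * B y) =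
      (A 0 + A 2) * ((B 0 + B 2) + (B 1 + B 3)) + (A 1 + A 3) * ((B 0 + B 2) - (B 1 + B 3)) := by
    simp [Fin.sum_univ_four, chshSign]
    ring
  have hA' : ∀ x, -1 ≤ A x ∧ A x ≤ 1 := fun x => abs_le.mp (hA x)
  have hB' : ∀ y, -1 ≤ B y ∧ B y ≤ 1 := fun y => abs_le.mp (hB y)
  rw [hsum]
  rcases le_total 0 ((B 0 + B 2) + (B 1 + B 3)) with h₁ | h₁ <;>
  rcases le_total 0 ((B 0 + B 2) - (B 1 + B 3)) with h₂ | h₂ <;>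
  nlinarith [hA' 0, hA' 1, hA' 2, hA' 3, hB' 0, hB' 1, hB' 2, hB' 3]

theorem IsLocal.chsh_le_eight {Q : Fin 2 → Fin 2 → Fin 4 → Fin 4 → ℝ} (hQ : IsLocal Q) :
    ∑ x, ∑ y, chshSign x y * correlator Q x y ≤ 8 := by
  obtain ⟨n, q, A, B, hq, hA, hB, hcorr⟩ := hQ.exists_correlator_eq
  calc ∑ x, ∑ y, chshSign x y * correlator Q x y
      = ∑ l, q l * ∑ x, ∑ y, chshSign x y * (A l x * B l y) := by
        simp only [hcorr, Finset.mul_sum]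
        refine (Finset.sum_congr rfl fun x _ => Finset.sum_comm).trans (Finset.sum_comm.trans ?_)
        exact Finset.sum_congr rfl fun l _ => Finset.sum_congr rfl fun x _ =>
          Finset.sum_congr rfl fun y _ => by ring
    _ ≤ ∑ l, q l * 8 :=
        Finset.sum_le_sum fun l _ =>
          mul_le_mul_of_nonneg_left (_root_.chsh_le_eight (hA l) (hB l)) (hq.1 l)
    _ = 8 := by rw [← Finset.sum_mul, hq.2, one_mul]

noncomputable def tsCorr (x y : Fin 4) : ℝ :=
  if (x : ℕ) * (y : ℕ) ≤ 1 then chshSign x y / √2 else 0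

theorem TsBox_eq_corrBox : TsBox = corrBox tsCorr := by
  funext a b x y
  rw [corrBox, spin_mul_spin]
  fin_cases x <;> fin_cases y <;> by_cases hab : a = b <;>
    simp [TsBox, tsCorr, chshSign, tsp, hab] <;> ring

theorem TsBoxF_eq_corrBox : TsBoxF = corrBox fun x y => chshSign x y / √2 := by
  funext a b x y
  rw [corrBox, spin_mul_spin]
  fin_cases x <;> fin_cases y <;> by_cases hab : a = b <;>
    simp [TsBoxF, TsBox, chshSign, tsp, hab] <;> ring

noncomputable def tsirelsonDiv : ℝ := corrDiv (1 / √2) (1 / 2)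

theorem corrDiv_chshSign (x y : Fin 4) :
    corrDiv (chshSign x y / √2) (chshSign x y / 2) = tsirelsonDiv := by
  rcases chshSign_eq_one_or x y with h | h <;> rw [h, tsirelsonDiv]
  rw [neg_div, neg_div, corrDiv_neg]

-- Four equally likely strategies `l`: on inputs 0 and 1 they are the four deterministic strategies
-- of CHSH value 2; the responses on inputs 2 and 3 solve the linear conditions making the
-- correlator there equal to that of `P₀`.
noncomputable def nearestLocalA : Fin 4 → Fin 4 → ℝ :=
  ![![1, 1, √2 - 1, √2 - 1], ![1, -1, -1, -1], ![1, 1, √2 - 1, √2 - 1], ![1, -1, 1, 1]]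

noncomputable def nearestLocalB : Fin 4 → Fin 4 → ℝ :=
  ![![1, 1, 1, 1], ![-1, 1, 1, 1], ![1, -1, √2 - 1, √2 - 1], ![1, 1, √2 - 1, √2 - 1]]

noncomputable def nearestLocalCorr (x y : Fin 4) : ℝ :=
  ∑ l, 1 / 4 * nearestLocalA l x * nearestLocalB l y

theorem nearestLocalCorr_eq (x y : Fin 4) :
    nearestLocalCorr x y =
      if (x : ℕ) ≤ 1 ∧ (y : ℕ) ≤ 1 then chshSign x y / 2 else tsCorr x y := by
  have h2 : √2 ^ 2 = 2 := Real.sq_sqrt zero_le_two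
  fin_cases x <;> fin_cases y <;>
    simp [nearestLocalCorr, Fin.sum_univ_four, nearestLocalA, nearestLocalB, chshSign, tsCorr] <;>
    field_simp <;> linarith [h2]

theorem abs_sqrt_two_sub_one_le_one : |√2 - 1| ≤ 1 :=
  abs_le.2 ⟨by linarith [one_lt_sqrt_two], by linarith [sqrt_two_lt_three_halves]⟩

theorem abs_nearestLocalA_le_one (l x : Fin 4) : |nearestLocalA l x| ≤ 1 := by
  fin_cases l <;> fin_cases x <;> simp [nearestLocalA, abs_sqrt_two_sub_one_le_one]

theorem abs_nearestLocalB_le_one (l y : Fin 4) : |nearestLocalB l y| ≤ 1 := by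
  fin_cases l <;> fin_cases y <;> simp [nearestLocalB, abs_sqrt_two_sub_one_le_one]

theorem isLocal_corrBox_nearestLocalCorr : IsLocal (corrBox nearestLocalCorr) :=
  isLocal_corrBox ⟨fun _ => by norm_num, by norm_num⟩ abs_nearestLocalA_le_one
    abs_nearestLocalB_le_one

theorem relEnt_TsBox_nearestLocal (x y : Fin 4) :
    relEnt (outDist TsBox x y) (outDist (corrBox nearestLocalCorr) x y) =
      if (x : ℕ) ≤ 1 ∧ (y : ℕ) ≤ 1 then ENNReal.ofReal tsirelsonDiv else 0 := by
  have hcorr := nearestLocalCorr_eq x y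
  rw [TsBox_eq_corrBox]
  split_ifs at hcorr ⊢ with h
  · have hts : tsCorr x y = chshSign x y / √2 := if_pos (by nlinarith)
    have habs : |nearestLocalCorr x y| < 1 := hcorr ▸ abs_chshSign_div_lt_one x y one_lt_two
    rw [relEnt_corrBox _ habs, hts, hcorr, corrDiv_chshSign]
  · have hcell : outDist (corrBox nearestLocalCorr) x y = outDist (corrBox tsCorr) x y := by
      funext z
      simp only [outDist, corrBox, hcorr]
    rw [hcell, relEnt_self]

theorem Su_TsBox_le :
    Su TsBox ≤ ((4 : ℕ) ^ 2 : ℝ≥0∞)⁻¹ * (4 * ENNReal.ofReal tsirelsonDiv) := by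
  have hsum : ∑ x, ∑ y, relEnt (outDist TsBox x y) (outDist (corrBox nearestLocalCorr) x y) =
      4 * ENNReal.ofReal tsirelsonDiv := by
    simp [relEnt_TsBox_nearestLocal, Fin.sum_univ_four]
    ring
  rw [← hsum]
  exact iInf₂_le (corrBox nearestLocalCorr)
    ⟨isLocal_corrBox_nearestLocalCorr.isBehavior, isLocal_corrBox_nearestLocalCorr⟩

theorem TsBoxF_pos (a b : Fin 2) (x y : Fin 4) : 0 < TsBoxF a b x y := by
  rw [TsBoxF_eq_corrBox]
  exact corrBox_pos (abs_chshSign_div_lt_one x y one_lt_sqrt_two) a b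

theorem TsBoxF_div_corrBox (a b : Fin 2) (x y : Fin 4) :
    TsBoxF a b x y / corrBox (fun x y => chshSign x y / 2) a b x y =
      (4 - √2) / 3 + (2 * √2 - 2) / 3 * (spin a * spin b * chshSign x y) := by
  have h2 : √2 ^ 2 = 2 := Real.sq_sqrt zero_le_two
  have hσ : spin a * spin b * chshSign x y = 1 ∨ spin a * spin b * chshSign x y = -1 := by
    rw [spin_mul_spin]
    rcases chshSign_eq_one_or x y with h | h <;> split_ifs <;> simp [h]
  rw [TsBoxF_eq_corrBox]
  simp only [corrBox, ← mul_div_assoc]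
  rcases hσ with h | h <;> rw [h] <;> field_simp <;> linarith [h2]

theorem IsLocal.sum_TsBoxF_div_corrBox_mul_le {Q : Fin 2 → Fin 2 → Fin 4 → Fin 4 → ℝ}
    (hQ : IsLocal Q) :
    ∑ x, ∑ y, ∑ a, ∑ b,
      TsBoxF a b x y / corrBox (fun x y => chshSign x y / 2) a b x y * Q a b x y ≤ 16 := by
  have hcell : ∀ x y, ∑ a, ∑ b,
      TsBoxF a b x y / corrBox (fun x y => chshSign x y / 2) a b x y * Q a b x y =
        (4 - √2) / 3 + (2 * √2 - 2) / 3 * (chshSign x y * correlator Q x y) := by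
    intro x y
    simp only [TsBoxF_div_corrBox, correlator, add_mul, Finset.sum_add_distrib,
      ← Finset.mul_sum, hQ.isBehavior.2, mul_one]
    simp only [Finset.mul_sum]
    exact congrArg _ (Finset.sum_congr rfl fun a _ => Finset.sum_congr rfl fun b _ => by ring)
  have hβ : 0 ≤ (2 * √2 - 2) / 3 := by linarith [one_lt_sqrt_two]
  have hchsh := mul_le_mul_of_nonneg_left hQ.chsh_le_eight hβ
  simp only [hcell, Finset.sum_add_distrib, ← Finset.mul_sum, Finset.sum_const, Finset.card_univ,
    Fintype.card_fin, nsmul_eq_mul]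
  push_cast
  linarith

theorem IsLocal.sixteen_mul_tsirelsonDiv_le {Q : Fin 2 → Fin 2 → Fin 4 → Fin 4 → ℝ}
    (hQ : IsLocal Q) (hpos : ∀ a b x y, 0 < Q a b x y) :
    16 * tsirelsonDiv ≤
      ∑ x, ∑ y, ∑ a, ∑ b, TsBoxF a b x y * log (TsBoxF a b x y / Q a b x y) := by
  set R := corrBox fun x y => chshSign x y / 2
  have hR : ∀ a b x y, 0 < R a b x y := fun a b x y =>
    corrBox_pos (abs_chshSign_div_lt_one x y one_lt_two) a b
  have hgibbs : ∑ x, ∑ y, ∑ a, ∑ b, (TsBoxF a b x y * log (TsBoxF a b x y / R a b x y) +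
      TsBoxF a b x y - TsBoxF a b x y / R a b x y * Q a b x y) ≤
      ∑ x, ∑ y, ∑ a, ∑ b, TsBoxF a b x y * log (TsBoxF a b x y / Q a b x y) :=
    Finset.sum_le_sum fun x _ => Finset.sum_le_sum fun y _ => Finset.sum_le_sum fun a _ =>
      Finset.sum_le_sum fun b _ =>
        mul_log_div_add_sub_le (TsBoxF_pos a b x y) (hpos a b x y) (hR a b x y)
  have hcell : ∀ x y, ∑ a, ∑ b, TsBoxF a b x y * log (TsBoxF a b x y / R a b x y) =
      tsirelsonDiv := fun x y => by
    rw [TsBoxF_eq_corrBox, sum_corrBox_mul_log_div, corrDiv_chshSign]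
  have hsum : ∀ x y, ∑ a, ∑ b, TsBoxF a b x y = 1 := fun x y => by
    rw [TsBoxF_eq_corrBox, sum_corrBox]
  simp only [Finset.sum_sub_distrib, Finset.sum_add_distrib, hcell, hsum, Finset.sum_const,
    Finset.card_univ, Fintype.card_fin, nsmul_eq_mul] at hgibbs
  push_cast at hgibbs
  linarith [hQ.sum_TsBoxF_div_corrBox_mul_le]

theorem IsLocal.ofReal_le_sum_relEnt_TsBoxF {Q : Fin 2 → Fin 2 → Fin 4 → Fin 4 → ℝ}
    (hQ : IsLocal Q) :
    ENNReal.ofReal (16 * tsirelsonDiv) ≤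
      ∑ x, ∑ y, relEnt (outDist TsBoxF x y) (outDist Q x y) := by
  by_cases hpos : ∀ a b x y, 0 < Q a b x y
  · have hcell : ∀ x y, relEnt (outDist TsBoxF x y) (outDist Q x y) = ENNReal.ofReal
        (∑ a, ∑ b, TsBoxF a b x y * log (TsBoxF a b x y / Q a b x y)) := fun x y => by
      rw [relEnt_eq_ofReal (q := outDist Q x y) fun z => (hpos z.1 z.2 x y).ne',
        Fintype.sum_prod_type]
      rfl
    have hsub (f : Fin 4 → ℝ) : ENNReal.ofReal (∑ i, f i) ≤ ∑ i, ENNReal.ofReal (f i) :=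
      Finset.le_sum_of_subadditive _ ENNReal.ofReal_zero.le (fun _ _ => ENNReal.ofReal_add_le) _ _
    simp only [hcell]
    exact (ENNReal.ofReal_le_ofReal (hQ.sixteen_mul_tsirelsonDiv_le hpos)).trans
      ((hsub _).trans (Finset.sum_le_sum fun x _ => hsub _))
  · simp only [not_forall, not_lt] at hpos
    obtain ⟨a, b, x, y, hQab⟩ := hpos
    have hzero : Q a b x y = 0 := le_antisymm hQab (hQ.isBehavior.1 a b x y)
    have htop : relEnt (outDist TsBoxF x y) (outDist Q x y) = ⊤ :=
      relEnt_eq_top (a, b) (TsBoxF_pos a b x y).ne' hzero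
    rw [ENNReal.sum_eq_top.2 ⟨x, Finset.mem_univ _,
      ENNReal.sum_eq_top.2 ⟨y, Finset.mem_univ _, htop⟩⟩]
    exact le_top

theorem le_Su_TsBoxF :
    ((4 : ℕ) ^ 2 : ℝ≥0∞)⁻¹ * ENNReal.ofReal (16 * tsirelsonDiv) ≤ Su TsBoxF :=
  le_iInf₂ fun _ hQ => mul_le_mul_right hQ.2.ofReal_le_sum_relEnt_TsBoxF _

/-- quadrupling of the uniform-input statistical strength in the
Tsirelson-box construction. -/
theorem Su_quadruples : 4 * Su TsBox ≤ Su TsBoxF := by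
  calc 4 * Su TsBox
      ≤ 4 * (((4 : ℕ) ^ 2 : ℝ≥0∞)⁻¹ * (4 * ENNReal.ofReal tsirelsonDiv)) :=
        mul_le_mul_right Su_TsBox_le 4
    _ = ((4 : ℕ) ^ 2 : ℝ≥0∞)⁻¹ * ENNReal.ofReal (16 * tsirelsonDiv) := by
        rw [ENNReal.ofReal_mul (by norm_num), ENNReal.ofReal_ofNat]
        ring
    _ ≤ Su TsBoxF := le_Su_TsBoxF
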